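/- arXiv:math/0606411 — 3 statements merged into one kernel-verified Lean document; each statement's English description precedes it below -/
import Mathlib

section
/- Let k(x) = C · x^b / (1 + c x)^{1 + a/c} for x > 0, where a, b, c > 0 with a/c > b and C = c^{b+1} Γ(a/c + 1) / (Γ(a/c − b) Γ(b+1)). Then k satisfies the integral equation (1 + c x) k(x) = a ∫_x^∞ (x/u)^b k(u) du for all x > 0. -/
/-!
The factor `(x/u)^b` cancels the `u^b` in `k u`, so the right-hand side is `a C x^b` times the
elementary integral `∫_x^∞ (1 + c u)^(-a/c - 1) du = (1 + c x)^(-a/c) / a`, which is exactly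
`(1 + c x) k x / (C x^b)`.
-/

open Set Real MeasureTheory Filter

lemma integral_Ioi_one_add_mul_rpow_neg_sub_one {c s x : ℝ} (hc : 0 < c) (hs : 0 < s)
    (hx : 0 < 1 + c * x) :
    ∫ u in Ioi x, (1 + c * u) ^ (-s - 1) = (1 + c * x) ^ (-s) / (c * s) := by
  have hpos : ∀ u ∈ Ici x, 0 < 1 + c * u := fun u hu => by nlinarith [mem_Ici.mp hu]
  have hderiv : ∀ u ∈ Ici x,
      HasDerivAt (fun u => -(1 + c * u) ^ (-s) / (c * s)) ((1 + c * u) ^ (-s - 1)) u := by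
    intro u hu
    have hlin : HasDerivAt (fun u => 1 + c * u) c u := by
      simpa using ((hasDerivAt_id u).const_mul c).const_add 1
    refine ((hlin.rpow_const (Or.inl (hpos u hu).ne')).neg.div_const (c * s)).congr_deriv ?_
    field_simp
  have hlim : Tendsto (fun u => -(1 + c * u) ^ (-s) / (c * s)) atTop (nhds 0) := by
    have hlin : Tendsto (fun u => 1 + c * u) atTop atTop :=
      tendsto_atTop_add_const_left _ _ (tendsto_id.const_mul_atTop hc)
    simpa using (((tendsto_rpow_neg_atTop hs).comp hlin).neg).div_const (c * s)
  rw [integral_Ioi_of_hasDerivAt_of_nonneg' hderiv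
    (fun u hu => (rpow_pos_of_pos (hpos u (Ioi_subset_Ici_self hu)) _).le) hlim]
  ring

lemma div_rpow_one_add_eq_mul_rpow_neg_sub_one {y s : ℝ} (hy : 0 < y) (z : ℝ) :
    z / y ^ (1 + s) = z * y ^ (-s - 1) := by
  rw [show -s - 1 = -(1 + s) by ring, rpow_neg hy.le, div_eq_mul_inv]

theorem stmt_1_general (a b c : ℝ) (ha : 0 < a) (hc : 0 < c)
    (C : ℝ)
    (k : ℝ → ℝ) (hk : ∀ x : ℝ, 0 < x → k x = C * x ^ b / (1 + c * x) ^ (1 + a / c)) :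
    ∀ x : ℝ, 0 < x →
      (1 + c * x) * k x = a * ∫ u in Ioi x, (x / u) ^ b * k u := by
  intro x hx
  have hpos : ∀ u, 0 < u → 0 < 1 + c * u := fun u hu => by positivity
  have hintegrand : EqOn (fun u => (x / u) ^ b * k u)
      (fun u => C * x ^ b * (1 + c * u) ^ (-(a / c) - 1)) (Ioi x) := by
    intro u hu
    have hu : 0 < u := hx.trans hu
    simp only [hk u hu, div_rpow_one_add_eq_mul_rpow_neg_sub_one (hpos u hu),
      div_rpow hx.le hu.le]
    field_simp
  rw [setIntegral_congr_fun measurableSet_Ioi hintegrand, integral_const_mul,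
    integral_Ioi_one_add_mul_rpow_neg_sub_one hc (div_pos ha hc) (hpos x hx), hk x hx,
    div_rpow_one_add_eq_mul_rpow_neg_sub_one (hpos x hx), mul_div_cancel₀ a hc.ne']
  calc (1 + c * x) * (C * x ^ b * (1 + c * x) ^ (-(a / c) - 1))
      = C * x ^ b * ((1 + c * x) ^ (1 : ℝ) * (1 + c * x) ^ (-(a / c) - 1)) := by
        rw [rpow_one]; ring
    _ = a * (C * x ^ b * ((1 + c * x) ^ (-(a / c)) / a)) := by
        rw [← rpow_add (hpos x hx)]; field_simp; ring_nf

theorem stmt_1 (a b c : ℝ) (ha : 0 < a) (hb : 0 < b) (hc : 0 < c)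
    (hab : b < a / c)
    (C : ℝ) (hC : C = c ^ (b + 1) * Real.Gamma (a / c + 1) /
      (Real.Gamma (a / c - b) * Real.Gamma (b + 1)))
    (k : ℝ → ℝ) (hk : ∀ x : ℝ, 0 < x → k x = C * x ^ b / (1 + c * x) ^ (1 + a / c)) :
    ∀ x : ℝ, 0 < x →
      (1 + c * x) * k x = a * ∫ u in Ioi x, (x / u) ^ b * k u :=
  stmt_1_general a b c ha hc C k hk
end

section
/- Let V be a real-valued Lévy process with no positive jumps, not the opposite of a subordinator, with Laplace exponent Φ(λ) = log E[e^{λ V_1}] finite on [0,∞), and suppose lim_{t→∞} V_t = −∞ a.s. Let κ > 0 be the unique positive root of Φ and let Ψ : [0,∞) → [κ,∞) be the right inverse of Φ. Then E[∫_0^∞ 1{V_t ≥ 0} dt] = Ψ'(0)/Ψ(0) = 1/(κ Φ'(κ)). -/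
/-!
The second identity is the inverse function rule `Φ'(κ) Ψ'(0) = 1`. For the first, the Laplace
transforms `λ ↦ E ∫₀^∞ e^{-λt} 1{V_t ≥ 0} dt` decrease in `λ`, so `Ψ'/Ψ = (log Ψ)'` is antitone on
`(0, ∞)`. By the mean value theorem, a derivative that is antitone on `(a, ∞)` is right-continuous
at `a`, hence `Ψ'(λ)/Ψ(λ) → Ψ'(0)/Ψ(0)` as `λ ↓ 0`, and monotone convergence identifies this limit
with `E ∫₀^∞ 1{V_t ≥ 0} dt`.
-/

open MeasureTheory Set Filter Topology ENNReal Function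

theorem tendsto_nhdsGT_of_hasDerivWithinAt_Ici_of_antitoneOn {G g : ℝ → ℝ} {a : ℝ}
    (hG : ∀ x ∈ Ici a, HasDerivWithinAt G (g x) (Ici a) x) (hg : AntitoneOn g (Ioi a)) :
    Tendsto g (𝓝[>] a) (𝓝 (g a)) := by
  have hmvt : ∀ x y, a ≤ x → x < y → ∃ c ∈ Ioo x y, g c = slope G x y := by
    intro x y hx hxy
    obtain ⟨c, hc, hgc⟩ := exists_hasDerivAt_eq_slope G g hxy
      (fun z hz => (hG z (hx.trans hz.1)).continuousWithinAt.mono fun w hw => hx.trans hw.1)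
      (fun z hz => (hG z (hx.trans hz.1.le)).hasDerivAt (Ici_mem_nhds (hx.trans_lt hz.1)))
    exact ⟨c, hc, hgc.trans (slope_def_field G x y).symm⟩
  have hslope : Tendsto (slope G a) (𝓝[>] a) (𝓝 (g a)) :=
    (hasDerivWithinAt_iff_tendsto_slope' (lt_irrefl a)).mp (hG a self_mem_Ici).Ioi_of_Ici
  have hupper : ∀ x ∈ Ioi a, g x ≤ slope G a x := by
    intro x hx
    obtain ⟨c, hc, hgc⟩ := hmvt a x le_rfl hx
    exact hgc ▸ hg hc.1 hx hc.2.le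
  have hlower : ∀ x ∈ Ioi a, 2 * slope G a (2 * x - a) - slope G a x ≤ g x := by
    intro x hx
    have hxa : x - a ≠ 0 := sub_ne_zero.mpr (ne_of_gt hx)
    obtain ⟨c, hc, hgc⟩ := hmvt x (2 * x - a) (le_of_lt hx) (by linarith [mem_Ioi.mp hx])
    calc 2 * slope G a (2 * x - a) - slope G a x = slope G x (2 * x - a) := by
          have h2 : 2 * x - a - a = 2 * (x - a) := by ring
          have h1 : 2 * x - a - x = x - a := by ring
          simp only [slope_def_field, h1, h2]
          field_simp
          ring
      _ = g c := hgc.symm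
      _ ≤ g x := hg hx (mem_Ioi.mpr (lt_trans hx hc.1)) hc.1.le
  have hdouble : Tendsto (fun x => 2 * x - a) (𝓝[>] a) (𝓝[>] a) := by
    refine tendsto_nhdsWithin_of_tendsto_nhds_of_eventually_within _ ?_ ?_
    · exact (Continuous.tendsto' (by fun_prop) a a (by ring)).mono_left nhdsWithin_le_nhds
    · exact eventually_nhdsWithin_of_forall fun x hx => by
        simp only [mem_Ioi] at hx ⊢; linarith
  refine tendsto_of_tendsto_of_tendsto_of_le_of_le' ?_ hslope
    (eventually_nhdsWithin_of_forall hlower) (eventually_nhdsWithin_of_forall hupper)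
  simpa [two_mul] using ((hslope.comp hdouble).const_mul 2).sub hslope

theorem Set.LeftInvOn.hasDerivAt_mul_eq_one {Φ Ψ : ℝ → ℝ} {s : Set ℝ} {x d D : ℝ}
    (hinv : LeftInvOn Φ Ψ s) (hΦ : HasDerivAt Φ d (Ψ x)) (hΨ : HasDerivWithinAt Ψ D s x)
    (hx : x ∈ s) (hs : UniqueDiffWithinAt ℝ s x) : d * D = 1 :=
  hs.eq_deriv _ (hΦ.comp_hasDerivWithinAt x hΨ)
    ((hasDerivWithinAt_id x s).congr (fun _ hy => hinv hy) (hinv hx))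

section Laplace

variable {Ω : Type*} [MeasurableSpace Ω] {μ : Measure Ω} {f : Ω → ℝ → ℝ}

-- A Lebesgue integral over `Ω × (0, ∞)`: unlike the iterated Bochner integral, it does not
-- collapse to the junk value `0` when the expectation is infinite.
noncomputable def expectedLaplace (μ : Measure Ω) (f : Ω → ℝ → ℝ) (lam : ℝ) : ℝ≥0∞ :=
  ∫⁻ z, ENNReal.ofReal (Real.exp (-lam * z.2) * f z.1 z.2) ∂μ.prod (volume.restrict (Ioi 0))

theorem ae_prod_restrict_Ioi_snd_pos (μ : Measure Ω) :
    ∀ᵐ z ∂μ.prod (volume.restrict (Ioi (0 : ℝ))), 0 < z.2 :=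
  Measure.quasiMeasurePreserving_snd.ae (ae_restrict_mem measurableSet_Ioi)

theorem expectedLaplace_antitone (hf0 : ∀ ω t, 0 ≤ f ω t) : Antitone (expectedLaplace μ f) := by
  intro a b hab
  refine lintegral_mono_ae ?_
  filter_upwards [ae_prod_restrict_Ioi_snd_pos μ] with z hz
  gcongr
  exact hf0 _ _

theorem expectedLaplace_lt_top [IsFiniteMeasure μ] (hf1 : ∀ ω t, f ω t ≤ 1) {lam : ℝ}
    (hlam : 0 < lam) :
    expectedLaplace μ f lam < ⊤ := by
  have hexp : Integrable (fun z : Ω × ℝ => Real.exp (-lam * z.2))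
      (μ.prod (volume.restrict (Ioi 0))) :=
    (exp_neg_integrableOn_Ioi 0 hlam).comp_snd μ
  refine lt_of_le_of_lt (lintegral_mono fun z => ?_) hexp.lintegral_lt_top
  exact ENNReal.ofReal_le_ofReal (mul_le_of_le_one_right (Real.exp_nonneg _) (hf1 _ _))

theorem integral_integral_eq_toReal_expectedLaplace [SFinite μ] (hfm : Measurable (uncurry f))
    (hf0 : ∀ ω t, 0 ≤ f ω t) {lam : ℝ} (hfin : expectedLaplace μ f lam ≠ ⊤) :
    ∫ ω, (∫ t in Ioi (0 : ℝ), Real.exp (-lam * t) * f ω t) ∂μ =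
      (expectedLaplace μ f lam).toReal := by
  have hmeas : Measurable fun z : Ω × ℝ => Real.exp (-lam * z.2) * f z.1 z.2 := by fun_prop
  have hnonneg : 0 ≤ᵐ[μ.prod (volume.restrict (Ioi 0))]
      fun z : Ω × ℝ => Real.exp (-lam * z.2) * f z.1 z.2 :=
    ae_of_all _ fun z => mul_nonneg (Real.exp_nonneg _) (hf0 _ _)
  have hint : Integrable (uncurry fun ω t => Real.exp (-lam * t) * f ω t)
      (μ.prod (volume.restrict (Ioi 0))) :=
    ⟨hmeas.aestronglyMeasurable, (hasFiniteIntegral_iff_ofReal hnonneg).mpr hfin.lt_top⟩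
  rw [integral_integral hint,
    integral_eq_lintegral_of_nonneg_ae hnonneg hmeas.aestronglyMeasurable]
  rfl

theorem tendsto_expectedLaplace (hfm : Measurable (uncurry f)) (hf0 : ∀ ω t, 0 ≤ f ω t)
    {u : ℕ → ℝ} (hu : Antitone u) (hu0 : Tendsto u atTop (𝓝 0)) :
    Tendsto (fun n => expectedLaplace μ f (u n)) atTop (𝓝 (expectedLaplace μ f 0)) := by
  refine lintegral_tendsto_of_tendsto_of_monotone (fun n => by fun_prop) ?_ ?_
  · filter_upwards [ae_prod_restrict_Ioi_snd_pos μ] with z hz m n hmn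
    dsimp only
    gcongr
    · exact hf0 _ _
    · exact hu hmn
  · refine ae_of_all _ fun z => (ENNReal.continuous_ofReal.tendsto _).comp ?_
    exact (((hu0.neg.mul_const z.2).rexp).mul_const _)

theorem antitoneOn_integral_integral_laplace [IsFiniteMeasure μ] (hfm : Measurable (uncurry f))
    (hf0 : ∀ ω t, 0 ≤ f ω t) (hf1 : ∀ ω t, f ω t ≤ 1) :
    AntitoneOn (fun lam => ∫ ω, (∫ t in Ioi (0 : ℝ), Real.exp (-lam * t) * f ω t) ∂μ)
      (Ioi 0) := by
  intro a ha b hb hab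
  have hfin : ∀ lam ∈ Ioi (0 : ℝ), expectedLaplace μ f lam ≠ ⊤ := fun lam hlam =>
    (expectedLaplace_lt_top hf1 hlam).ne
  simp only [integral_integral_eq_toReal_expectedLaplace hfm hf0 (hfin _ ha),
    integral_integral_eq_toReal_expectedLaplace hfm hf0 (hfin _ hb)]
  exact toReal_mono (hfin a ha) (expectedLaplace_antitone hf0 hab)

theorem integral_integral_eq_of_tendsto_laplace [IsFiniteMeasure μ] (hfm : Measurable (uncurry f))
    (hf0 : ∀ ω t, 0 ≤ f ω t) (hf1 : ∀ ω t, f ω t ≤ 1) {c : ℝ}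
    (h : Tendsto (fun lam => ∫ ω, (∫ t in Ioi (0 : ℝ), Real.exp (-lam * t) * f ω t) ∂μ)
      (𝓝[>] 0) (𝓝 c)) :
    ∫ ω, (∫ t in Ioi (0 : ℝ), f ω t) ∂μ = c := by
  set u : ℕ → ℝ := fun n => 1 / ((n : ℝ) + 1)
  have hu_pos : ∀ n, 0 < u n := fun n => by positivity
  have hu : Antitone u := fun m n hmn =>
    one_div_le_one_div_of_le (by positivity) (by simpa using hmn)
  have hu0 : Tendsto u atTop (𝓝 0) := tendsto_one_div_add_atTop_nhds_zero_nat
  have hlim : Tendsto (fun n => expectedLaplace μ f (u n)) atTop (𝓝 (ENNReal.ofReal c)) := by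
    refine ((ENNReal.continuous_ofReal.tendsto c).comp
      (h.comp (tendsto_nhdsWithin_iff.2 ⟨hu0, Eventually.of_forall hu_pos⟩))).congr fun n => ?_
    have hfin := (expectedLaplace_lt_top (μ := μ) hf1 (hu_pos n)).ne
    rw [comp_apply, comp_apply, integral_integral_eq_toReal_expectedLaplace hfm hf0 hfin,
      ofReal_toReal hfin]
  have h0 : expectedLaplace μ f 0 = ENNReal.ofReal c :=
    tendsto_nhds_unique (tendsto_expectedLaplace hfm hf0 hu hu0) hlim
  have hc : 0 ≤ c := ge_of_tendsto h (Eventually.of_forall fun lam =>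
    integral_nonneg fun ω => setIntegral_nonneg measurableSet_Ioi fun t _ =>
      mul_nonneg (Real.exp_nonneg _) (hf0 ω t))
  have h0' := integral_integral_eq_toReal_expectedLaplace (lam := 0) hfm hf0 (h0 ▸ ofReal_ne_top)
  simpa only [neg_zero, zero_mul, Real.exp_zero, one_mul, h0, toReal_ofReal hc] using h0'

end Laplace

theorem stmt_5_general {Ω : Type*} [MeasurableSpace Ω] (μ : Measure Ω) [IsProbabilityMeasure μ]
    (V : ℝ → Ω → ℝ)
    (hjm : Measurable (Function.uncurry V))
    (Φ : ℝ → ℝ)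
    (hlap : ∀ lam : ℝ, 0 ≤ lam → ∀ t : ℝ, 0 ≤ t →
      ∫ ω, Real.exp (lam * V t ω) ∂μ = Real.exp (t * Φ lam))
    (κ : ℝ) (hκ : 0 < κ)
    (Ψ DΨ : ℝ → ℝ)
    (hΨκ : Ψ 0 = κ)
    (hΨinv : ∀ lam : ℝ, 0 ≤ lam → Φ (Ψ lam) = lam)
    (hΨderiv : ∀ lam : ℝ, 0 ≤ lam → HasDerivWithinAt Ψ (DΨ lam) (Ici 0) lam)
    (dΦκ : ℝ) (hΦderiv : HasDerivAt Φ dΦκ κ)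
    (hident : ∀ lam : ℝ, 0 < lam →
      ∫ ω, (∫ t in Ioi (0:ℝ), Real.exp (-lam * t) * (if 0 ≤ V t ω then (1:ℝ) else 0)) ∂μ =
        DΨ lam / Ψ lam) :
    ∫ ω, (∫ t in Ioi (0:ℝ), (if 0 ≤ V t ω then (1:ℝ) else 0)) ∂μ = DΨ 0 / Ψ 0 ∧
      DΨ 0 / Ψ 0 = 1 / (κ * dΦκ) := by
  have hΦ0 : Φ 0 = 0 :=
    (Real.exp_eq_one_iff _).mp (by simpa using (hlap 0 le_rfl 1 zero_le_one).symm)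
  have hinv : LeftInvOn Φ Ψ (Ici 0) := fun lam hlam => hΨinv lam hlam
  have hΨne : ∀ lam ∈ Ici (0 : ℝ), Ψ lam ≠ 0 := by
    intro lam hlam hzero
    obtain rfl : lam = 0 := by rw [← hinv hlam, hzero, hΦ0]
    exact hκ.ne' (hΨκ ▸ hzero)
  have hmul : dΦκ * DΨ 0 = 1 := hinv.hasDerivAt_mul_eq_one (hΨκ ▸ hΦderiv) (hΨderiv 0 le_rfl)
    self_mem_Ici (uniqueDiffOn_Ici 0 0 self_mem_Ici)
  set f : Ω → ℝ → ℝ := fun ω t => if 0 ≤ V t ω then 1 else 0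
  have hfm : Measurable (uncurry f) :=
    Measurable.ite (measurableSet_le measurable_const (hjm.comp measurable_swap))
      measurable_const measurable_const
  have hf0 : ∀ ω t, 0 ≤ f ω t := fun ω t => by simp only [f]; split_ifs <;> norm_num
  have hf1 : ∀ ω t, f ω t ≤ 1 := fun ω t => by simp only [f]; split_ifs <;> norm_num
  -- `DΨ / Ψ` is the derivative of `log ∘ Ψ`, and it is antitone because it is a Laplace transform
  have hlimit : Tendsto (fun lam => DΨ lam / Ψ lam) (𝓝[>] 0) (𝓝 (DΨ 0 / Ψ 0)) :=
    tendsto_nhdsGT_of_hasDerivWithinAt_Ici_of_antitoneOn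
      (fun lam hlam => (hΨderiv lam hlam).log (hΨne lam hlam))
      ((antitoneOn_integral_integral_laplace hfm hf0 hf1).congr fun lam hlam => hident lam hlam)
  refine ⟨integral_integral_eq_of_tendsto_laplace hfm hf0 hf1
    (hlimit.congr' (eventually_nhdsWithin_of_forall fun lam hlam => (hident lam hlam).symm)), ?_⟩
  rw [hΨκ, div_eq_div_iff hκ.ne' (mul_ne_zero hκ.ne' (left_ne_zero_of_mul_eq_one hmul))]
  linear_combination κ * hmul

theorem stmt_5 {Ω : Type*} [MeasurableSpace Ω] (μ : Measure Ω) [IsProbabilityMeasure μ]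
    (V : ℝ → Ω → ℝ)
    (hjm : Measurable (Function.uncurry V))
    (Φ : ℝ → ℝ)
    (hlap : ∀ lam : ℝ, 0 ≤ lam → ∀ t : ℝ, 0 ≤ t →
      ∫ ω, Real.exp (lam * V t ω) ∂μ = Real.exp (t * Φ lam))
    (hdrift : ∀ᵐ ω ∂μ, Tendsto (fun t => V t ω) atTop atBot)
    (κ : ℝ) (hκ : 0 < κ) (hκroot : Φ κ = 0)
    (hκuniq : ∀ x : ℝ, 0 < x → Φ x = 0 → x = κ)
    (Ψ DΨ : ℝ → ℝ)
    (hΨκ : Ψ 0 = κ)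
    (hΨinv : ∀ lam : ℝ, 0 ≤ lam → Φ (Ψ lam) = lam)
    (hΨderiv : ∀ lam : ℝ, 0 ≤ lam → HasDerivWithinAt Ψ (DΨ lam) (Ici 0) lam)
    (dΦκ : ℝ) (hΦderiv : HasDerivAt Φ dΦκ κ) (hΦκpos : 0 < dΦκ)
    (hident : ∀ lam : ℝ, 0 < lam →
      ∫ ω, (∫ t in Ioi (0:ℝ), Real.exp (-lam * t) * (if 0 ≤ V t ω then (1:ℝ) else 0)) ∂μ =
        DΨ lam / Ψ lam) :
    ∫ ω, (∫ t in Ioi (0:ℝ), (if 0 ≤ V t ω then (1:ℝ) else 0)) ∂μ = DΨ 0 / Ψ 0 ∧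
      DΨ 0 / Ψ 0 = 1 / (κ * dΦκ) :=
  stmt_5_general μ V hjm Φ hlap κ hκ Ψ DΨ hΨκ hΨinv hΨderiv dΦκ hΦderiv hident
end

section
/- Let (χ_n)_{n≥1} be i.i.d. nonnegative random variables and c > 0 a constant. Define R_0^x = x and R_{n+1}^x = (1/4)R_n^x + χ_{n+1}. Let S_n = Σ_{k=1}^n (χ_k − c) and μ = inf{n ≥ 1 : S_n < 0}. Then on the event {μ = m}, for any x ≥ (16/3)c, one has R_m^x ≤ x/2. -/
/-!
Let `R (n+1) = a R n + χ (n+1)` with `0 ≤ a < 1` and `S n = ∑_{k ≤ n} (χ k - c)`.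
The excess `D n = R n - S n - c / (1 - a)` obeys the exact recursion
`D (n+1) = a D n - (1 - a) S n`, so as long as the walk `S` stays nonnegative the excess
contracts geometrically: `D n ≤ aⁿ D 0`. At the first time `m` the walk is negative this gives
`R m < aᵐ (x - c / (1 - a)) + c / (1 - a)`, which for `a = 1/4`, `m ≥ 1` and `x ≥ 16c/3`
is at most `(x - 4c/3)/4 + 4c/3 ≤ x/2`.
-/

section LinearRecursion

variable {a c : ℝ} {χ R S : ℕ → ℝ}

lemma excess_succ (ha : a ≠ 1) (hR : ∀ n, R (n + 1) = a * R n + χ (n + 1))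
    (hS : ∀ n, S (n + 1) = S n + (χ (n + 1) - c)) (n : ℕ) :
    R (n + 1) - S (n + 1) - c / (1 - a) = a * (R n - S n - c / (1 - a)) - (1 - a) * S n := by
  have : 1 - a ≠ 0 := sub_ne_zero.mpr (Ne.symm ha)
  rw [hR, hS]
  field_simp
  ring

lemma excess_le_pow_mul (ha0 : 0 ≤ a) (ha1 : a < 1) (hR : ∀ n, R (n + 1) = a * R n + χ (n + 1))
    (hS : ∀ n, S (n + 1) = S n + (χ (n + 1) - c)) :
    ∀ n, (∀ k < n, 0 ≤ S k) →
      R n - S n - c / (1 - a) ≤ a ^ n * (R 0 - S 0 - c / (1 - a))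
  | 0, _ => by simp
  | n + 1, hSk => by
    have ih := excess_le_pow_mul ha0 ha1 hR hS n fun k hk => hSk k (by omega)
    have hSn : 0 ≤ (1 - a) * S n := mul_nonneg (by linarith) (hSk n n.lt_succ_self)
    calc R (n + 1) - S (n + 1) - c / (1 - a)
        = a * (R n - S n - c / (1 - a)) - (1 - a) * S n := excess_succ ha1.ne hR hS n
      _ ≤ a * (R n - S n - c / (1 - a)) := sub_le_self _ hSn
      _ ≤ a * (a ^ n * (R 0 - S 0 - c / (1 - a))) := mul_le_mul_of_nonneg_left ih ha0
      _ = a ^ (n + 1) * (R 0 - S 0 - c / (1 - a)) := by ring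

end LinearRecursion

theorem stmt_9_general (χ : ℕ → ℝ) (c : ℝ) (hc : 0 < c)
    (x : ℝ) (hx : (16 / 3) * c ≤ x)
    (R : ℕ → ℝ) (hR0 : R 0 = x) (hRrec : ∀ n : ℕ, R (n + 1) = (1 / 4) * R n + χ (n + 1))
    (S : ℕ → ℝ) (hS : ∀ n : ℕ, S n = ∑ k ∈ Finset.Icc 1 n, (χ k - c))
    (m : ℕ) (hm1 : 1 ≤ m) (hSm : S m < 0)
    (hSk : ∀ k : ℕ, 1 ≤ k → k < m → 0 ≤ S k) :
    R m ≤ x / 2 := by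
  have hS0 : S 0 = 0 := by simp [hS]
  have hSsucc : ∀ n, S (n + 1) = S n + (χ (n + 1) - c) := fun n => by
    rw [hS, hS, Finset.sum_Icc_succ_top (Nat.le_add_left 1 n)]
  have hSnonneg : ∀ k < m, 0 ≤ S k := fun k hk =>
    k.eq_zero_or_pos.elim (fun h => h ▸ hS0.ge) fun h => hSk k h hk
  have hexcess := excess_le_pow_mul (by norm_num) (by norm_num) hRrec hSsucc m hSnonneg
  rw [hR0, hS0] at hexcess
  have hconst : c / (1 - 1 / 4 : ℝ) = 4 / 3 * c := by ring
  have hpow : (1 / 4 : ℝ) ^ m ≤ 1 / 4 := pow_le_of_le_one (by norm_num) (by norm_num) (by omega)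
  have hgap : 0 ≤ x - c / (1 - 1 / 4) := by linarith
  have := mul_le_mul_of_nonneg_right hpow hgap
  linarith

theorem stmt_9 (χ : ℕ → ℝ) (hχ : ∀ n, 0 ≤ χ n) (c : ℝ) (hc : 0 < c)
    (x : ℝ) (hx : (16 / 3) * c ≤ x)
    (R : ℕ → ℝ) (hR0 : R 0 = x) (hRrec : ∀ n : ℕ, R (n + 1) = (1 / 4) * R n + χ (n + 1))
    (S : ℕ → ℝ) (hS : ∀ n : ℕ, S n = ∑ k ∈ Finset.Icc 1 n, (χ k - c))
    (m : ℕ) (hm1 : 1 ≤ m) (hSm : S m < 0)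
    (hSk : ∀ k : ℕ, 1 ≤ k → k < m → 0 ≤ S k) :
    R m ≤ x / 2 :=
  stmt_9_general χ c hc x hx R hR0 hRrec S hS m hm1 hSm hSk
end
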